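/- arXiv:2101.01814 — 6 statements merged into one kernel-verified Lean document; each statement's English description precedes it below -/
import Mathlib

section
/- Let κ be a regular uncountable cardinal. Between any two elements q <_{Q_κ} r of Q_κ there exists a strictly increasing sequence of elements of Q_κ of order type κ, all of whose members lie strictly between q and r. -/
universe u

open Cardinal Set

namespace FarTrees

/-- `QSet κ`: the set of functions `f : κ → 2` whose support is non-empty
and has size less than `κ` (the underlying set of the linear order `Q_κ`). -/
def QSet (κ : Cardinal.{u}) : Set (κ.ord.ToType → Bool) :=
  {f | (∃ i, f i = true) ∧ #{i | f i = true} < κ}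

/-- The lexicographic strict order on functions `κ → 2` (with `false < true`). -/
def qlt {κ : Cardinal.{u}} (f g : κ.ord.ToType → Bool) : Prop :=
  ∃ i, (∀ j, j < i → f j = g j) ∧ f i < g i

/-- The corresponding non-strict order. -/
def qle {κ : Cardinal.{u}} (f g : κ.ord.ToType → Bool) : Prop :=
  qlt f g ∨ f = g

/-- `(R, e)` is a Dedekind completion of `Q_κ`: `R` is a (conditionally) complete
dense linear order without endpoints, and `e` is an order embedding of `Q_κ`
into `R` with dense image. -/
def IsDedekindCompletion (κ : Cardinal.{u}) (R : Type u) [LinearOrder R]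
    (e : QSet κ → R) : Prop :=
  (∀ p q : QSet κ, qlt p.1 q.1 ↔ e p < e q) ∧
  (∀ a b : R, a < b → ∃ q : QSet κ, a < e q ∧ e q < b) ∧
  (∀ a : R, ∃ b, b < a) ∧ (∀ a : R, ∃ b, a < b) ∧
  (∀ s : Set R, s.Nonempty → BddAbove s → ∃ a, IsLUB s a)

/-- `A` is unbounded (cofinal) in the ordinal `δ`. -/
def UnbIn (δ : Ordinal.{u}) (A : Set Ordinal.{u}) : Prop :=
  ∀ γ < δ, ∃ β ∈ A, γ ≤ β ∧ β < δ

/-- `β` is a limit point (accumulation point) of the set of ordinals `A`. -/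
def IsAccOf (β : Ordinal.{u}) (A : Set Ordinal.{u}) : Prop :=
  0 < β ∧ ∀ γ < β, ∃ c ∈ A, γ < c ∧ c < β

/-- `C` is a club (closed and unbounded) subset of the ordinal `δ`. -/
def IsClubIn (δ : Ordinal.{u}) (C : Set Ordinal.{u}) : Prop :=
  C ⊆ Iio δ ∧ UnbIn δ C ∧ ∀ β < δ, IsAccOf β C → β ∈ C

/-- `S` is a stationary subset of the ordinal `δ`: it meets every club in `δ`. -/
def IsStationaryIn (δ : Ordinal.{u}) (S : Set Ordinal.{u}) : Prop :=
  ∀ C, IsClubIn δ C → (S ∩ C).Nonempty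

/-- The set of ordinals `A` has order type at most `δ`, i.e. it order-embeds
into `δ` (for well-orders this is equivalent to `type A ≤ δ`). -/
def OtypeLE (A : Set Ordinal.{u}) (δ : Ordinal.{u}) : Prop :=
  ∃ f : A → Ordinal.{u}, (∀ a, f a < δ) ∧ ∀ a b : A, a.1 < b.1 → f a < f b

/-- `κ⁺ ∩ cof(κ)`: the ordinals below `κ⁺` of cofinality `κ`. -/
def cofSet (κ : Cardinal.{u}) : Set Ordinal.{u} :=
  {α | α < (Order.succ κ).ord ∧ α.cof = κ}

/-- The Brodsky–Rinot proxy principle `⊠*_κ(𝒮)`: there is a sequence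
`⟨C_δ : δ < κ⁺⟩`, each `C_δ` a club in `δ` of order type at most `κ`, such that
for every unbounded `X ⊆ κ⁺` and every `S ∈ 𝒮` there are stationarily many
`δ ∈ S` with `(C_δ ∩ X) \ lim(C_δ)` cofinal in `δ`. -/
def Boxtimes (κ : Cardinal.{u}) (𝒮 : Set (Set Ordinal.{u})) : Prop :=
  ∃ Cs : Ordinal.{u} → Set Ordinal.{u},
    (∀ δ < (Order.succ κ).ord, IsClubIn δ (Cs δ) ∧ OtypeLE (Cs δ) κ.ord) ∧
    ∀ X : Set Ordinal.{u}, X ⊆ Iio (Order.succ κ).ord →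
      UnbIn (Order.succ κ).ord X → ∀ S ∈ 𝒮,
      IsStationaryIn (Order.succ κ).ord
        {δ ∈ S | UnbIn δ ((Cs δ ∩ X) \ {β | IsAccOf β (Cs δ)})}

/-- A tree: a strict partial order in which the set of predecessors of every
element is well-ordered. -/
structure Tree' (α : Type u) where
  lt : α → α → Prop
  trans : ∀ {x y z}, lt x y → lt y z → lt x z
  irrefl : ∀ x, ¬ lt x x
  wo : ∀ x : α, IsWellOrder {y // lt y x} (fun a b => lt a.1 b.1)

namespace Tree'

variable {α β : Type u}

/-- The height of a node: the order type of its set of predecessors. -/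
noncomputable def ht (T : Tree' α) (x : α) : Ordinal.{u} :=
  @Ordinal.type {y // T.lt y x} (fun a b => T.lt a.1 b.1) (T.wo x)

/-- Level `δ` of the tree. -/
def level (T : Tree' α) (δ : Ordinal.{u}) : Set α := {x | T.ht x = δ}

/-- `T` is a `λ`-tree: it has height `λ` and all levels of size `< λ`. -/
def IsKTree (T : Tree' α) (lam : Cardinal.{u}) : Prop :=
  (∀ x, T.ht x < lam.ord) ∧ (∀ δ < lam.ord, (T.level δ).Nonempty) ∧
  ∀ δ < lam.ord, #(T.level δ) < lam

/-- A chain: a linearly ordered subset. -/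
def IsChain (T : Tree' α) (c : Set α) : Prop :=
  ∀ x ∈ c, ∀ y ∈ c, x ≠ y → T.lt x y ∨ T.lt y x

/-- An antichain: a set of pairwise incomparable elements. -/
def IsAntichain (T : Tree' α) (A : Set α) : Prop :=
  ∀ x ∈ A, ∀ y ∈ A, x ≠ y → ¬ T.lt x y ∧ ¬ T.lt y x

/-- A branch: a maximal chain. -/
def IsBranch (T : Tree' α) (b : Set α) : Prop :=
  T.IsChain b ∧ ∀ c, T.IsChain c → b ⊆ c → b = c

/-- A cofinal branch of a `λ`-tree: a branch meeting every level below `λ`. -/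
def IsCofinalBranch (T : Tree' α) (lam : Cardinal.{u}) (b : Set α) : Prop :=
  T.IsBranch b ∧ ∀ δ < lam.ord, ∃ x ∈ b, T.ht x = δ

/-- A `λ`-Aronszajn tree: a `λ`-tree with no cofinal branch. -/
def IsAronszajn (T : Tree' α) (lam : Cardinal.{u}) : Prop :=
  T.IsKTree lam ∧ ¬ ∃ b, T.IsCofinalBranch lam b

/-- A Suslin `λ`-tree: a `λ`-tree with no chains or antichains of size `λ`. -/
def IsSuslin (T : Tree' α) (lam : Cardinal.{u}) : Prop :=
  T.IsKTree lam ∧ (∀ c, T.IsChain c → #c < lam) ∧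
    ∀ A, T.IsAntichain A → #A < lam

/-- Normality of a `λ`-tree. -/
def IsNormal (T : Tree' α) (lam : Cardinal.{u}) : Prop :=
  (∀ x, ∀ γ, T.ht x < γ → γ < lam.ord → ∃ y, T.lt x y ∧ T.ht y = γ) ∧
  (∀ x y, x ≠ y → T.ht x = T.ht y → Order.IsSuccLimit (T.ht x) →
    {z | T.lt z x} ≠ {z | T.lt z y}) ∧
  (∀ x, ∃ y z, T.lt x y ∧ T.lt x z ∧ y ≠ z ∧ ¬ T.lt y z ∧ ¬ T.lt z y)

/-- `κ`-completeness: every chain of order type `< κ` has an upper bound. -/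
def IsComplete (T : Tree' α) (κ : Cardinal.{u}) : Prop :=
  ∀ δ : Ordinal.{u}, δ < κ.ord → ∀ s : δ.ToType → α,
    (∀ i j, i < j → T.lt (s i) (s j)) →
    ∃ u, ∀ i, T.lt (s i) u ∨ s i = u

/-- `T` is `L`-embeddable: some map into `L` is strictly increasing on `<_T`. -/
def LEmbeddable (T : Tree' α) (L : Type u) [LT L] : Prop :=
  ∃ f : α → L, ∀ x y, T.lt x y → f x < f y

/-- `T` is special (for a tree of height `μ⁺`): there is a map into `μ`
injective on chains. -/
def IsSpecial (T : Tree' α) (μ : Cardinal.{u}) : Prop :=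
  ∃ g : α → μ.ord.ToType, ∀ x y, T.lt x y → g x ≠ g y

/-- The restriction `T↾S` is special: there is a map from the nodes of height
in `S` into `μ` which is injective on chains. -/
def IsSpecialOn (T : Tree' α) (S : Set Ordinal.{u}) (μ : Cardinal.{u}) : Prop :=
  ∃ g : {x : α // T.ht x ∈ S} → μ.ord.ToType,
    ∀ x y : {x : α // T.ht x ∈ S}, T.lt x.1 y.1 → g x ≠ g y

/-- A downward closed subset of a tree. -/
def DownwardClosed (T : Tree' α) (D : Set α) : Prop :=
  ∀ x ∈ D, ∀ y, T.lt y x → y ∈ D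

end Tree'

/-- A club isomorphism of `T` and `U` on the club `C`: an order isomorphism
between `T↾C` and `U↾C`. -/
def ClubIsoOn {α β : Type u} (T : Tree' α) (U : Tree' β)
    (C : Set Ordinal.{u}) : Prop :=
  ∃ f : {x : α // T.ht x ∈ C} → {y : β // U.ht y ∈ C},
    Function.Bijective f ∧ ∀ x y, T.lt x.1 y.1 ↔ U.lt (f x).1 (f y).1

/-- `T` and `U` are club isomorphic `λ`-trees. -/
def ClubIsomorphic {α β : Type u} (T : Tree' α) (U : Tree' β)
    (lam : Cardinal.{u}) : Prop :=
  ∃ C, IsClubIn lam.ord C ∧ ClubIsoOn T U C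

/-- `T` and `U` are near: they have downward closed subtrees which are club
isomorphic.  (For downward closed subtrees, heights in the subtree agree with
heights in the ambient tree.) -/
def Near {α β : Type u} (T : Tree' α) (U : Tree' β) (lam : Cardinal.{u}) : Prop :=
  ∃ D₁ : Set α, ∃ D₂ : Set β, T.DownwardClosed D₁ ∧ U.DownwardClosed D₂ ∧
    ∃ C, IsClubIn lam.ord C ∧
      ∃ f : {x : α // x ∈ D₁ ∧ T.ht x ∈ C} → {y : β // y ∈ D₂ ∧ U.ht y ∈ C},
        Function.Bijective f ∧ ∀ x y, T.lt x.1 y.1 ↔ U.lt (f x).1 (f y).1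

/-- `T` and `U` are far: they are not near. -/
def Far {α β : Type u} (T : Tree' α) (U : Tree' β) (lam : Cardinal.{u}) : Prop :=
  ¬ Near T U lam

/-!
Let `i` be the first place where `q` and `r` differ, so `q i = false` and `r i = true`.
Since `κ` is infinite and `q` has support of size `< κ`, the positions `j > i` with
`q j = false` form a set of size `κ`; fix an injection `e` of `κ` into it. Switching on
the bits of `q` at `e β` for `β ≤ α` gives `s α`. It agrees with `q` up to `i`, hence lies
below `r`, and its support grows strictly with `α`; since a function whose support strictly
contains another's is lexicographically larger, `s` is increasing and lies above `q`.
-/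

section Lex

variable {κ : Cardinal.{u}}

theorem mk_Iic_ord_toType_lt (hκ : ℵ₀ ≤ κ) (i : κ.ord.ToType) : #(Iic i) < κ := by
  simpa using mk_Iic_lt i (by simp) (by simpa using hκ)

theorem mk_eq_of_mk_compl_lt (hκ : ℵ₀ ≤ κ) {Z : Set κ.ord.ToType} (hZ : #↑Zᶜ < κ) :
    #Z = κ := by
  have : Infinite κ.ord.ToType := infinite_iff.2 (by simpa using hκ)
  simpa using mk_compl_of_infinite Zᶜ (by simpa using hZ)

theorem qlt_of_setOf_ssubset {f g : κ.ord.ToType → Bool}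
    (h : {j | f j = true} ⊂ {j | g j = true}) : qlt f g := by
  have hne : ∃ j, f j ≠ g j := by
    by_contra! heq
    exact h.ne (by rw [funext heq])
  obtain ⟨i, hi⟩ := exists_minimal_of_wellFoundedLT _ hne
  refine ⟨i, fun j hj => not_not.1 fun hfg => hi.not_lt hfg hj, ?_⟩
  have hfi : f i = false := by
    by_contra hfi
    rw [Bool.not_eq_false] at hfi
    exact hi.1 (hfi.trans (h.subset hfi).symm)
  have hgi : g i = true := by simpa [hfi] using hi.1.symm
  simp [hfi, hgi]

open Classical in
noncomputable def addSupport (f : κ.ord.ToType → Bool) (A : Set κ.ord.ToType) :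
    κ.ord.ToType → Bool :=
  fun j => f j || decide (j ∈ A)

theorem setOf_addSupport (f : κ.ord.ToType → Bool) (A : Set κ.ord.ToType) :
    {j | addSupport f A j = true} = {j | f j = true} ∪ A := by
  ext j
  simp [addSupport]

theorem addSupport_of_notMem {f : κ.ord.ToType → Bool} {A : Set κ.ord.ToType} {j : κ.ord.ToType}
    (hj : j ∉ A) : addSupport f A j = f j := by
  simp [addSupport, hj]

theorem addSupport_empty (f : κ.ord.ToType → Bool) : addSupport f ∅ = f :=
  funext fun _ => addSupport_of_notMem (notMem_empty _)

theorem addSupport_mem_qSet (hκ : ℵ₀ ≤ κ) {f : κ.ord.ToType → Bool} (hf : f ∈ QSet κ)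
    {A : Set κ.ord.ToType} (hA : #A < κ) : addSupport f A ∈ QSet κ := by
  obtain ⟨⟨i, hi⟩, hsmall⟩ := hf
  refine ⟨⟨i, by simp [addSupport, hi]⟩, ?_⟩
  rw [setOf_addSupport]
  exact (mk_union_le _ _).trans_lt (add_lt_of_lt hκ hsmall hA)

theorem qlt_addSupport_addSupport {f : κ.ord.ToType → Bool} {A B : Set κ.ord.ToType}
    {b : κ.ord.ToType} (hAB : A ⊆ B) (hb : b ∈ B) (hbA : b ∉ A) (hfb : f b = false) :
    qlt (addSupport f A) (addSupport f B) := by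
  refine qlt_of_setOf_ssubset ?_
  rw [setOf_addSupport, setOf_addSupport]
  refine ssubset_iff_subset_ne.2 ⟨union_subset_union_right _ hAB, fun h => ?_⟩
  have hb' : b ∈ {j | f j = true} ∪ A := by rw [h]; exact Or.inr hb
  rcases hb' with hfb' | hbA'
  · simp [hfb] at hfb'
  · exact hbA hbA'

end Lex

theorem stmt0_general (κ : Cardinal.{u}) (hunc : ℵ₀ < κ)
    (q r : QSet κ) (hqr : qlt q.1 r.1) :
    ∃ s : κ.ord.ToType → QSet κ,
      (∀ i j : κ.ord.ToType, i < j → qlt (s i).1 (s j).1) ∧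
      ∀ i, qlt q.1 (s i).1 ∧ qlt (s i).1 r.1 := by
  obtain ⟨i, hagree, hlt⟩ := hqr
  set Z := {j | i < j ∧ q.1 j = false}
  have hZc : #↑Zᶜ < κ := by
    have hsub : Zᶜ ⊆ Iic i ∪ {j | q.1 j = true} := fun j hj => by
      by_contra! h
      simp_all [Z]
    exact (mk_le_mk_of_subset hsub).trans_lt ((mk_union_le _ _).trans_lt
      (add_lt_of_lt hunc.le (mk_Iic_ord_toType_lt hunc.le i) q.2.2))
  obtain ⟨E⟩ : Nonempty (κ.ord.ToType ↪ Z) := by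
    rw [← le_def, mk_ord_toType, mk_eq_of_mk_compl_lt hunc.le hZc]
  let e : κ.ord.ToType → κ.ord.ToType := fun α => E α
  have he_notMem : ∀ {α β}, α < β → e β ∉ e '' Iic α := by
    rintro α β hαβ ⟨γ, hγ, h⟩
    exact (hγ.trans_lt hαβ).ne (E.injective (Subtype.ext h))
  refine ⟨fun α => ⟨addSupport q.1 (e '' Iic α), addSupport_mem_qSet hunc.le q.2
    (mk_image_le.trans_lt (mk_Iic_ord_toType_lt hunc.le α))⟩, fun α β hαβ => ?_,
    fun α => ⟨?_, ?_⟩⟩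
  · exact qlt_addSupport_addSupport (image_mono (Iic_subset_Iic.2 hαβ.le))
      (mem_image_of_mem _ (mem_Iic.2 le_rfl)) (he_notMem hαβ) (E β).2.2
  · simpa [addSupport_empty] using qlt_addSupport_addSupport (empty_subset _)
      (mem_image_of_mem e (mem_Iic.2 le_rfl)) (notMem_empty _) (E α).2.2
  · have hle : ∀ j ≤ i, addSupport q.1 (e '' Iic α) j = q.1 j := fun j hj =>
      addSupport_of_notMem (by rintro ⟨β, -, rfl⟩; exact (E β).2.1.not_ge hj)
    exact ⟨i, fun j hj => (hle j hj.le).trans (hagree j hj), (hle i le_rfl).trans_lt hlt⟩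

/-- Between any two elements of `Q_κ` there is a strictly increasing sequence
of order type `κ` lying strictly between them. -/
theorem stmt0 (κ : Cardinal.{u}) (hreg : κ.IsRegular) (hunc : ℵ₀ < κ)
    (q r : QSet κ) (hqr : qlt q.1 r.1) :
    ∃ s : κ.ord.ToType → QSet κ,
      (∀ i j : κ.ord.ToType, i < j → qlt (s i).1 (s j).1) ∧
      ∀ i, qlt q.1 (s i).1 ∧ qlt (s i).1 r.1 :=
  stmt0_general κ hunc q r hqr

end FarTrees
end

section
/- Let κ be a regular uncountable cardinal. Between any two elements q <_{R_κ} r of R_κ there exists a strictly increasing sequence of elements of R_κ of order type κ, all of whose members lie strictly between q and r. -/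
universe u

open Cardinal Set

namespace FarTrees

/-!
Choose `p < q` in `Q_κ` with `a < e p < e q < b`, and let `i₀` be the first index where they
differ. By regularity of `κ`, the support of `p` together with `i₀` lies below some `m < κ`.
Switching on in `p` all the bits of `[m, t β)`, for a strictly increasing `t : κ → (m, κ)`,
gives a lexicographically increasing `κ`-sequence above `p` whose members still agree with `p`
up to `i₀`, hence stay below `q`.
-/

section orIndicator

variable {ι : Type*}

open scoped Classical in
noncomputable def orIndicator (p : ι → Bool) (s : Set ι) : ι → Bool :=
  fun j => p j || decide (j ∈ s)

variable {p : ι → Bool} {s t : Set ι}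

theorem orIndicator_of_notMem {j : ι} (hj : j ∉ s) : orIndicator p s j = p j := by
  simp [orIndicator, hj]

@[simp]
theorem orIndicator_empty : orIndicator p ∅ = p := by
  funext j; exact orIndicator_of_notMem (notMem_empty j)

theorem orIndicator_lt_orIndicator (hst : s ⊆ t) {j : ι} (hjt : j ∈ t) (hjs : j ∉ s)
    (hpj : p j = false) : orIndicator p s < orIndicator p t := by
  refine Pi.lt_def.2 ⟨fun i => ?_, j, ?_⟩
  · by_cases hi : i ∈ s
    · simp [orIndicator, hi, hst hi]
    · simpa [orIndicator, hi] using Bool.left_le_or _ _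
  · simp [orIndicator, hjt, hjs, hpj]

theorem lt_orIndicator {j : ι} (hj : j ∈ s) (hpj : p j = false) : p < orIndicator p s := by
  simpa using orIndicator_lt_orIndicator (empty_subset s) hj (notMem_empty j) hpj

theorem support_orIndicator_subset :
    {j | orIndicator p s j = true} ⊆ {j | p j = true} ∪ s := by
  intro j; simp [orIndicator]

end orIndicator

section regular

variable {κ : Cardinal.{u}}

theorem qlt_of_lt {f g : κ.ord.ToType → Bool} (h : f < g) : qlt f g :=
  Pi.lex_lt_of_lt wellFounded_lt h

theorem orIndicator_mem_qSet (hκ : ℵ₀ ≤ κ) {p : κ.ord.ToType → Bool} (hp : p ∈ QSet κ)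
    {s : Set κ.ord.ToType} (hs : #s < κ) : orIndicator p s ∈ QSet κ := by
  obtain ⟨⟨i, hi⟩, hcard⟩ := hp
  refine ⟨⟨i, by simp [orIndicator, hi]⟩, ?_⟩
  calc #{j | orIndicator p s j = true}
      ≤ #({j | p j = true} ∪ s : Set κ.ord.ToType) :=
        mk_le_mk_of_subset support_orIndicator_subset
    _ ≤ #{j | p j = true} + #s := mk_union_le _ _
    _ < κ := add_lt_of_lt hκ hcard hs

theorem exists_forall_lt_of_mk_lt (hκ : κ.IsRegular) {S : Set κ.ord.ToType} (hS : #S < κ) :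
    ∃ m, ∀ j ∈ S, j < m := by
  by_contra! h
  have : κ ≤ #S := by
    simpa [hκ.cof_ord] using Order.cof_le (α := κ.ord.ToType) fun m => h m
  exact this.not_gt hS

open Ordinal in
theorem exists_strictMono_forall_gt (hκ : ℵ₀ ≤ κ) (m : κ.ord.ToType) :
    ∃ t : κ.ord.ToType → κ.ord.ToType, StrictMono t ∧ ∀ γ, m < t γ := by
  set μ : Ordinal := Order.succ (ToType.mk.symm m : Ordinal)
  have hμ : μ < κ.ord := (isSuccLimit_ord hκ).succ_lt (ToType.mk.symm m).2
  refine ⟨fun γ => ToType.mk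
    ⟨μ + ToType.mk.symm γ, isPrincipal_add_ord hκ hμ (mem_Iio.1 (ToType.mk.symm γ).2)⟩,
    fun γ γ' h => ?_, fun γ => ?_⟩
  · exact ToType.mk.strictMono (Subtype.mk_lt_mk.2
      ((add_lt_add_iff_left μ).2 (Subtype.coe_lt_coe.2 (ToType.mk.symm.strictMono h))))
  · rw [← ToType.mk.symm.lt_iff_lt, OrderIso.symm_apply_apply, ← Subtype.coe_lt_coe]
    exact (Order.lt_succ _).trans_le le_self_add

theorem exists_strictMono_between_of_qlt (hκ : κ.IsRegular) {p q : QSet κ} (hpq : qlt p.1 q.1) :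
    ∃ s : κ.ord.ToType → QSet κ, (∀ β β', β < β' → qlt (s β).1 (s β').1) ∧
      ∀ β, qlt p.1 (s β).1 ∧ qlt (s β).1 q.1 := by
  obtain ⟨i₀, hagree, hi₀⟩ := hpq
  obtain ⟨m, hm⟩ := exists_forall_lt_of_mk_lt hκ (S := insert i₀ {j | p.1 j = true}) <|
    mk_insert_le.trans_lt (add_lt_of_lt hκ.aleph0_le p.2.2 (one_lt_aleph0.trans_le hκ.aleph0_le))
  have hpm : ∀ j, m ≤ j → p.1 j = false := fun j hj => by
    simpa using mt (hm j ∘ Or.inr) hj.not_gt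
  have hi₀m : ∀ {j}, j ≤ i₀ → ∀ β, j ∉ Ico m β := fun hj _ hjm =>
    (hj.trans_lt (hm i₀ (mem_insert _ _))).not_ge hjm.1
  obtain ⟨t, ht_mono, ht_gt⟩ := exists_strictMono_forall_gt hκ.aleph0_le m
  let s β : QSet κ := ⟨orIndicator p.1 (Ico m (t β)), orIndicator_mem_qSet hκ.aleph0_le p.2 <|
    (mk_le_mk_of_subset Ico_subset_Iio_self).trans_lt (by simpa using mk_Iio_lt (t β))⟩
  refine ⟨s, fun β β' h => qlt_of_lt ?_, fun β => ⟨qlt_of_lt ?_, i₀, fun j hj => ?_, ?_⟩⟩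
  · exact orIndicator_lt_orIndicator (Ico_subset_Ico_right (ht_mono h).le)
      ⟨(ht_gt β).le, ht_mono h⟩ right_notMem_Ico (hpm _ (ht_gt β).le)
  · exact lt_orIndicator (left_mem_Ico.2 (ht_gt β)) (hpm m le_rfl)
  · exact (orIndicator_of_notMem (hi₀m hj.le _)).trans (hagree j hj)
  · exact (orIndicator_of_notMem (hi₀m le_rfl _)).trans_lt hi₀

end regular

theorem stmt3_general (κ : Cardinal.{u}) (hreg : κ.IsRegular)
    (R : Type u) [LinearOrder R] (e : QSet κ → R)
    (hRe : IsDedekindCompletion κ R e) (a b : R) (hab : a < b) :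
    ∃ s : κ.ord.ToType → R, StrictMono s ∧ ∀ i, a < s i ∧ s i < b := by
  obtain ⟨hemb, hdense, -⟩ := hRe
  obtain ⟨p, hap, hpb⟩ := hdense a b hab
  obtain ⟨q, hpq, hqb⟩ := hdense (e p) b hpb
  obtain ⟨s, hs_mono, hs_between⟩ := exists_strictMono_between_of_qlt hreg ((hemb p q).2 hpq)
  exact ⟨fun β => e (s β), fun β β' h => (hemb _ _).1 (hs_mono β β' h),
    fun β => ⟨hap.trans ((hemb _ _).1 (hs_between β).1),
      ((hemb _ _).1 (hs_between β).2).trans hqb⟩⟩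

/-- Between any two elements of `R_κ` there is a strictly increasing sequence
of order type `κ` lying strictly between them. -/
theorem stmt3 (κ : Cardinal.{u}) (hreg : κ.IsRegular) (hunc : ℵ₀ < κ)
    (R : Type u) [LinearOrder R] (e : QSet κ → R)
    (hRe : IsDedekindCompletion κ R e) (a b : R) (hab : a < b) :
    ∃ s : κ.ord.ToType → R, StrictMono s ∧ ∀ i, a < s i ∧ s i < b :=
  stmt3_general κ hreg R e hRe a b hab

end FarTrees
end

section
/- Let κ be a regular uncountable cardinal. Every strictly increasing sequence of elements of R_κ whose order type is a limit ordinal less than κ has a least upper bound in R_κ, and this least upper bound belongs to Q_κ. -/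
universe u

open Cardinal Set

namespace FarTrees

/- The supremum of a lexicographic chain `⟨Q i : i ∈ ι⟩` in `Q_κ` is computed coordinatewise:
at `α` it takes the value of any `Q i` which no later `Q j` changes at or below `α`, and
`false` where no such `i` exists. If `ι` has no maximum, every `Q i` lies strictly below this
function, and anything strictly below it already lies below some `Q i`. Its support is contained
in the union of the supports of the `Q i`, so by regularity of `κ` it lies in `Q_κ` when
`#ι < κ`. A sequence `s` of length `δ` in `R_κ` can be interleaved with such a chain,
`s i < Q i < s (i + 1)`, which has the same upper bounds; by density of `Q_κ` in `R_κ`, the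
supremum of the chain in `Q_κ` is its least upper bound in `R_κ`. -/

section Lex

variable {κ : Cardinal.{u}} {f g : κ.ord.ToType → Bool}

theorem qlt.exists_eq_true (h : qlt f g) : ∃ i, g i = true := by
  obtain ⟨i, -, hi⟩ := h
  exact ⟨i, (Bool.lt_iff.1 hi).2⟩

theorem qlt.apply_lt_of_eq_below {d : κ.ord.ToType} (h : qlt f g)
    (hbelow : ∀ β < d, f β = g β) (hne : f d ≠ g d) : f d < g d := by
  obtain ⟨i, hi, hlt⟩ := h
  rcases lt_trichotomy d i with hdi | rfl | hid
  · exact absurd (hi d hdi) hne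
  · exact hlt
  · exact absurd (hbelow i hid) hlt.ne

end Lex

section LexSup

variable {κ : Cardinal.{u}} {ι : Type*} [LinearOrder ι] (Q : ι → κ.ord.ToType → Bool)

def IsStableUpTo (i : ι) (α : κ.ord.ToType) : Prop :=
  ∀ j, i < j → ∀ β ≤ α, Q j β = Q i β

open Classical in
noncomputable def lexSup (α : κ.ord.ToType) : Bool :=
  decide (∃ i, IsStableUpTo Q i α ∧ Q i α = true)

variable {Q}

theorem IsStableUpTo.mono {i : ι} {α β : κ.ord.ToType} (h : IsStableUpTo Q i α) (hβ : β ≤ α) :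
    IsStableUpTo Q i β :=
  fun j hij γ hγ => h j hij γ (hγ.trans hβ)

theorem IsStableUpTo.lexSup_eq {i : ι} {α : κ.ord.ToType} (h : IsStableUpTo Q i α) :
    lexSup Q α = Q i α := by
  have coherent : ∀ k, IsStableUpTo Q k α → Q k α = Q i α := by
    intro k hk
    rcases lt_trichotomy i k with hik | rfl | hki
    · exact h k hik α le_rfl
    · rfl
    · exact (hk i hki α le_rfl).symm
  cases hi : Q i α
  · simpa [lexSup] using fun k hk => (coherent k hk).trans hi
  · simpa [lexSup] using ⟨i, h, hi⟩

theorem lexSup_support_subset : {α | lexSup Q α = true} ⊆ ⋃ i, {α | Q i α = true} := by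
  intro α hα
  simp only [lexSup, decide_eq_true_eq, Set.mem_ofPred_eq] at hα
  obtain ⟨i, -, hi⟩ := hα
  exact Set.mem_iUnion.2 ⟨i, hi⟩

theorem exists_qlt_of_qlt_lexSup {p : κ.ord.ToType → Bool} (hp : qlt p (lexSup Q)) :
    ∃ i, qlt p (Q i) := by
  obtain ⟨d, hbelow, hd⟩ := hp
  obtain ⟨i, hstable, -⟩ : ∃ i, IsStableUpTo Q i d ∧ Q i d = true := by
    simpa [lexSup] using (Bool.lt_iff.1 hd).2
  refine ⟨i, d, fun β hβ => (hbelow β hβ).trans (hstable.mono hβ.le).lexSup_eq, ?_⟩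
  rwa [← hstable.lexSup_eq]

/-- A still later `Q k` agrees with `Q j` below `d` and, lying above `Q j`, cannot drop to
`false` at `d`. -/
theorem isStableUpTo_of_forall_lt (hQ : ∀ i j, i < j → qlt (Q i) (Q j)) {i j : ι}
    {d : κ.ord.ToType} (hi : ∀ β < d, IsStableUpTo Q i β) (hij : i < j) (hj : Q j d = true) :
    IsStableUpTo Q j d := by
  intro k hjk β hβ
  have hbelow : ∀ γ < d, Q j γ = Q k γ := fun γ hγ =>
    (hi γ hγ j hij γ le_rfl).trans (hi γ hγ k (hij.trans hjk) γ le_rfl).symm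
  rcases hβ.lt_or_eq with hβd | rfl
  · exact (hbelow β hβd).symm
  · by_contra hne
    have := (Bool.lt_iff.1 ((hQ j k hjk).apply_lt_of_eq_below hbelow (Ne.symm hne))).1
    simp [hj] at this

theorem qlt_lexSup [NoMaxOrder ι] (hQ : ∀ i j, i < j → qlt (Q i) (Q j)) (i : ι) :
    qlt (Q i) (lexSup Q) := by
  have hunstable : {α | ¬ IsStableUpTo Q i α}.Nonempty := by
    obtain ⟨j, hij⟩ := exists_gt i
    obtain ⟨d, -, hd⟩ := hQ i j hij
    exact ⟨d, fun h => hd.ne' (h j hij d le_rfl)⟩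
  obtain ⟨d, hd, hmin⟩ := wellFounded_lt.has_min _ hunstable
  have hstable : ∀ β < d, IsStableUpTo Q i β := fun β hβ => by_contra fun h => hmin β h hβ
  obtain ⟨j, hij, β, hβ, hne⟩ : ∃ j, i < j ∧ ∃ β ≤ d, Q j β ≠ Q i β := by
    simpa [IsStableUpTo] using hd
  obtain rfl : β = d := hβ.eq_of_not_lt fun hβd => hne (hstable β hβd j hij β le_rfl)
  have hbelow : ∀ γ < β, Q i γ = Q j γ := fun γ hγ => (hstable γ hγ j hij γ le_rfl).symm
  have hlt := (hQ i j hij).apply_lt_of_eq_below hbelow (Ne.symm hne)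
  have hjβ := isStableUpTo_of_forall_lt hQ hstable hij (Bool.lt_iff.1 hlt).2
  refine ⟨β, fun γ hγ => ((hstable γ hγ).lexSup_eq).symm, ?_⟩
  rwa [hjβ.lexSup_eq]

end LexSup

theorem lexSup_mem_QSet {κ : Cardinal.{u}} {ι : Type u} [LinearOrder ι] [Nonempty ι]
    [NoMaxOrder ι] {Q : ι → κ.ord.ToType → Bool} (hQ : ∀ i j, i < j → qlt (Q i) (Q j))
    (hreg : κ.IsRegular) (hcard : #ι < κ) (hQmem : ∀ i, Q i ∈ QSet κ) :
    lexSup Q ∈ QSet κ := by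
  refine ⟨(qlt_lexSup hQ (Classical.arbitrary ι)).exists_eq_true, ?_⟩
  refine (mk_le_mk_of_subset lexSup_support_subset).trans_lt ?_
  exact (card_iUnion_lt_iff_forall_of_isRegular hreg hcard).2 fun i => (hQmem i).2

theorem upperBounds_range_eq_of_cofinal {ι ι' R : Type*} [Preorder R] {s : ι → R} {a : ι' → R}
    (hsa : ∀ i, ∃ j, s i ≤ a j) (has : ∀ j, ∃ i, a j ≤ s i) :
    upperBounds (range s) = upperBounds (range a) := by
  ext x
  simp only [mem_upperBounds, forall_mem_range]
  constructor
  · intro hx j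
    obtain ⟨i, hi⟩ := has j
    exact hi.trans (hx i)
  · intro hx i
    obtain ⟨j, hj⟩ := hsa i
    exact hj.trans (hx j)

theorem IsDedekindCompletion.isLUB_range {κ : Cardinal.{u}} {R : Type u} [LinearOrder R]
    {e : QSet κ → R} (hRe : IsDedekindCompletion κ R e) {ι : Type*} {Q : ι → QSet κ}
    {q : QSet κ} (hub : ∀ i, qlt (Q i).1 q.1)
    (hleast : ∀ p : QSet κ, qlt p.1 q.1 → ∃ i, qlt p.1 (Q i).1) :
    IsLUB (range (e ∘ Q)) (e q) := by
  refine ⟨forall_mem_range.2 fun i => ((hRe.1 _ _).1 (hub i)).le, fun r hr => ?_⟩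
  by_contra! hrq
  obtain ⟨p, hrp, hpq⟩ := hRe.2.1 r (e q) hrq
  obtain ⟨i, hpi⟩ := hleast p ((hRe.1 p q).2 hpq)
  exact (hrp.trans ((hRe.1 p (Q i)).1 hpi)).not_ge (hr (mem_range_self i))

theorem stmt4_general (κ : Cardinal.{u}) (hreg : κ.IsRegular)
    (R : Type u) [LinearOrder R] (e : QSet κ → R)
    (hRe : IsDedekindCompletion κ R e)
    (δ : Ordinal.{u}) (hlim : Order.IsSuccLimit δ) (hδ : δ < κ.ord)
    (s : δ.ToType → R) (hs : StrictMono s) :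
    ∃ x : R, IsLUB (Set.range s) x ∧ x ∈ Set.range e := by
  have : Nonempty δ.ToType := Ordinal.nonempty_toType_iff.2 hlim.ne_bot
  have : NoMaxOrder δ.ToType :=
    Ordinal.isSuccPrelimit_type_lt_iff.1 ((Ordinal.type_toType δ).symm ▸ hlim.isSuccPrelimit)
  choose Q hsQ hQs using fun i => hRe.2.1 _ _ (hs (Order.lt_succ i))
  have hQ : ∀ i j, i < j → qlt (Q i).1 (Q j).1 := fun i j hij =>
    (hRe.1 _ _).2 <| (hQs i).trans <| (hs.monotone (Order.succ_le_of_lt hij)).trans_lt (hsQ j)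
  have hcard : #δ.ToType < κ := by rwa [Cardinal.mk_toType, ← Cardinal.lt_ord]
  let q : QSet κ := ⟨lexSup fun i => (Q i).1, lexSup_mem_QSet hQ hreg hcard fun i => (Q i).2⟩
  refine ⟨e q, ?_, q, rfl⟩
  rw [isLUB_congr (upperBounds_range_eq_of_cofinal (a := e ∘ Q)
    (fun i => ⟨i, (hsQ i).le⟩) (fun i => ⟨Order.succ i, (hQs i).le⟩))]
  exact hRe.isLUB_range (qlt_lexSup hQ) fun p hp => exists_qlt_of_qlt_lexSup hp

/-- Every strictly increasing sequence in `R_κ` whose order type is a limit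
ordinal less than `κ` has a least upper bound, and this bound lies in `Q_κ`. -/
theorem stmt4 (κ : Cardinal.{u}) (hreg : κ.IsRegular) (hunc : ℵ₀ < κ)
    (R : Type u) [LinearOrder R] (e : QSet κ → R)
    (hRe : IsDedekindCompletion κ R e)
    (δ : Ordinal.{u}) (hlim : Order.IsSuccLimit δ) (hδ : δ < κ.ord)
    (s : δ.ToType → R) (hs : StrictMono s) :
    ∃ x : R, IsLUB (Set.range s) x ∧ x ∈ Set.range e :=
  stmt4_general κ hreg R e hRe δ hlim hδ s hs

end FarTrees
end

section
/- Let λ be a regular uncountable cardinal and assume that T and U are club isomorphic λ-trees. If A ⊆ U is an antichain such that S := {ht_U(x) : x ∈ A} is a stationary subset of λ, then there exist a club C ⊆ λ and an antichain B ⊆ T such that {ht_T(y) : y ∈ B} = S ∩ C. -/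
universe u

open Cardinal Set

namespace FarTrees

/-!
A club isomorphism `f : T↾C → U↾C` preserves heights. By induction on height: if `x` and `f x`
had different heights, the smaller one, lying in `C`, would be the height of a predecessor on the
other side, and transporting that predecessor through `f` contradicts the inductive hypothesis.
Hence `f` pulls the part of `A` lying on levels in `C` back to an antichain of `T` with the same
set of heights.
-/

namespace Tree'

variable {α : Type u} (T : Tree' α)

theorem ht_eq_typein {x y : α} (h : T.lt y x) :
    T.ht y = @Ordinal.typein {z // T.lt z x} (fun a b => T.lt a.1 b.1) (T.wo x) ⟨y, h⟩ := by
  have := T.wo x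
  have := T.wo y
  rw [← Ordinal.type_subrel]
  exact Ordinal.type_eq.2 ⟨⟨⟨fun z => ⟨⟨z.1, T.trans z.2 h⟩, z.2⟩,
    fun z => ⟨z.1.1, z.2⟩, fun _ => rfl, fun _ => rfl⟩, Iff.rfl⟩⟩

variable {T}

theorem ht_lt_ht {x y : α} (h : T.lt y x) : T.ht y < T.ht x := by
  have := T.wo x
  rw [T.ht_eq_typein h]
  exact Ordinal.typein_lt_type _ _

theorem exists_lt_ht_eq {x : α} {γ : Ordinal.{u}} (h : γ < T.ht x) :
    ∃ y, T.lt y x ∧ T.ht y = γ := by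
  have := T.wo x
  obtain ⟨y, hy⟩ := Ordinal.typein_surj (fun a b : {z // T.lt z x} => T.lt a.1 b.1) h
  exact ⟨y.1, y.2, by rw [T.ht_eq_typein y.2]; exact hy⟩

end Tree'

namespace ClubIsoOn

variable {α β : Type u} {T : Tree' α} {U : Tree' β} {C : Set Ordinal.{u}}
  {f : {x : α // T.ht x ∈ C} → {y : β // U.ht y ∈ C}}

theorem ht_map (hsurj : Function.Surjective f)
    (hf : ∀ x y, T.lt x.1 y.1 ↔ U.lt (f x).1 (f y).1) (x : {x : α // T.ht x ∈ C}) :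
    U.ht (f x).1 = T.ht x.1 := by
  induction x using (InvImage.wf (fun x : {x // T.ht x ∈ C} => T.ht x.1) wellFounded_lt).induction
    with | _ x ih =>
  rcases lt_trichotomy (U.ht (f x).1) (T.ht x.1) with hlt | heq | hgt
  · obtain ⟨y, hyx, hy⟩ := Tree'.exists_lt_ht_eq hlt
    have hyC : T.ht y ∈ C := hy ▸ (f x).2
    have hfy : U.ht (f ⟨y, hyC⟩).1 < T.ht y :=
      hy ▸ Tree'.ht_lt_ht ((hf ⟨y, hyC⟩ x).1 hyx)
    exact absurd (ih ⟨y, hyC⟩ (Tree'.ht_lt_ht hyx)) hfy.ne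
  · exact heq
  · obtain ⟨z, hzx, hz⟩ := Tree'.exists_lt_ht_eq hgt
    obtain ⟨w, hw⟩ := hsurj ⟨z, hz ▸ x.2⟩
    have hwx : T.lt w.1 x.1 := (hf w x).2 (hw ▸ hzx)
    have hfw : U.ht (f w).1 = T.ht x.1 := by rw [hw]; exact hz
    exact absurd (ih w (Tree'.ht_lt_ht hwx)) (hfw ▸ (Tree'.ht_lt_ht hwx).ne')

theorem exists_antichain_ht_image_eq (hiso : ClubIsoOn T U C) {A : Set β}
    (hA : U.IsAntichain A) :
    ∃ B : Set α, T.IsAntichain B ∧ T.ht '' B = U.ht '' A ∩ C := by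
  obtain ⟨f, ⟨hinj, hsurj⟩, hf⟩ := hiso
  refine ⟨{x | ∃ h : T.ht x ∈ C, (f ⟨x, h⟩).1 ∈ A}, ?_, ?_⟩
  · rintro x ⟨hxC, hxA⟩ y ⟨hyC, hyA⟩ hxy
    have hne : (f ⟨x, hxC⟩).1 ≠ (f ⟨y, hyC⟩).1 := fun h =>
      hxy (congrArg Subtype.val (hinj (Subtype.ext h)))
    obtain ⟨hnxy, hnyx⟩ := hA _ hxA _ hyA hne
    exact ⟨fun h => hnxy ((hf _ _).1 h), fun h => hnyx ((hf _ _).1 h)⟩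
  · ext γ
    constructor
    · rintro ⟨x, ⟨hxC, hxA⟩, rfl⟩
      exact ⟨⟨_, hxA, ht_map hsurj hf ⟨x, hxC⟩⟩, hxC⟩
    · rintro ⟨⟨z, hzA, rfl⟩, hzC⟩
      obtain ⟨w, hw⟩ := hsurj ⟨z, hzC⟩
      refine ⟨w.1, ⟨w.2, hw ▸ hzA⟩, ?_⟩
      rw [← ht_map hsurj hf w, hw]

end ClubIsoOn

theorem stmt9_general (lam : Cardinal.{u})
    {α β : Type u} (T : Tree' α) (U : Tree' β)
    (hiso : ClubIsomorphic T U lam)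
    (A : Set β) (hA : U.IsAntichain A) :
    ∃ C, IsClubIn lam.ord C ∧ ∃ B : Set α, T.IsAntichain B ∧
      T.ht '' B = (U.ht '' A) ∩ C := by
  obtain ⟨C, hC, hCiso⟩ := hiso
  exact ⟨C, hC, hCiso.exists_antichain_ht_image_eq hA⟩

/-- Lemma 2.2: a club isomorphism carries an antichain whose set of heights is
stationary to an antichain whose set of heights is the intersection of the
original set of heights with a club. -/
theorem stmt9 (lam : Cardinal.{u}) (hreg : lam.IsRegular) (hunc : ℵ₀ < lam)
    {α β : Type u} (T : Tree' α) (U : Tree' β)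
    (hT : T.IsKTree lam) (hU : U.IsKTree lam)
    (hiso : ClubIsomorphic T U lam)
    (A : Set β) (hA : U.IsAntichain A)
    (hstat : IsStationaryIn lam.ord (U.ht '' A)) :
    ∃ C, IsClubIn lam.ord C ∧ ∃ B : Set α, T.IsAntichain B ∧
      T.ht '' B = (U.ht '' A) ∩ C :=
  stmt9_general lam T U hiso A hA

end FarTrees
end

section
/- Let λ = μ⁺ be a successor cardinal with λ regular uncountable, let T be a λ-tree, and let S ⊆ λ be a stationary set such that T↾S is special, i.e., there exists a function from T↾S to μ which is injective on chains. Then there exists an antichain A ⊆ T↾S such that {ht_T(x) : x ∈ A} is a stationary subset of S. -/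
universe u

open Cardinal Set

namespace FarTrees

/-!
The fibres of a specializing map `g : T↾S → μ` are antichains, and their sets of heights cover `S`
(every level below `λ` is nonempty). Since `λ` is regular and uncountable, the union of
`μ < λ` nonstationary sets is nonstationary, so some fibre has a stationary set of heights.
Clubs and stationary sets below `λ` are compared with Mathlib's `IsClub` and `IsStationary`
on `Iio λ`, where this completeness is `isStationary_iUnion_iff`.
-/

section Clubs

variable {o : Ordinal.{u}}

theorem IsClubIn.isClub_preimage {C : Set Ordinal.{u}} (hC : IsClubIn o C) :
    IsClub (Subtype.val ⁻¹' C : Set (Iio o)) := by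
  refine ⟨fun t htC ⟨x₀, hx₀⟩ _ x hx => ?_, fun a => ?_⟩
  · by_cases hxt : x ∈ t
    · exact htC hxt
    have hlt : ∀ y ∈ t, y.1 < x.1 := fun y hy =>
      lt_of_le_of_ne (hx.1 hy) fun h => hxt (Subtype.ext h ▸ hy)
    refine hC.2.2 x.1 x.2 ⟨(zero_le (a := x₀.1)).trans_lt (hlt x₀ hx₀), fun γ hγ => ?_⟩
    · obtain ⟨y, hyt, hγy⟩ := (lt_isLUB_iff hx (b := ⟨γ, hγ.trans x.2⟩)).1 hγ
      exact ⟨y.1, htC hyt, hγy, hlt y hyt⟩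
  · obtain ⟨β, hβC, haβ, hβo⟩ := hC.2.1 a.1 a.2
    exact ⟨⟨β, hβo⟩, hβC, haβ⟩

theorem isClubIn_image_of_isClub {D : Set (Iio o)} (hD : IsClub D) :
    IsClubIn o (Subtype.val '' D) := by
  refine ⟨image_subset_iff.2 fun x _ => x.2, fun γ hγ => ?_, fun β hβ hacc => ?_⟩
  · obtain ⟨d, hdD, hγd⟩ := hD.isCofinal ⟨γ, hγ⟩
    exact ⟨d.1, mem_image_of_mem _ hdD, hγd, d.2⟩
  · obtain ⟨_, ⟨d₀, hd₀D, rfl⟩, -, hd₀β⟩ := hacc.2 0 hacc.1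
    have hlub : IsLUB {d ∈ D | d.1 < β} ⟨β, hβ⟩ := by
      refine ⟨fun d hd => hd.2.le, fun b hb => not_lt.1 fun hbβ => ?_⟩
      obtain ⟨_, ⟨c, hcD, rfl⟩, hbc, hcβ⟩ := hacc.2 b.1 hbβ
      exact (hb ⟨hcD, hcβ⟩).not_gt hbc
    exact ⟨_, hD.isLUB_mem (t := {d ∈ D | d.1 < β}) (fun d hd => hd.1)
      ⟨d₀, hd₀D, hd₀β⟩ hlub, rfl⟩

theorem isStationary_preimage_iff {S : Set Ordinal.{u}} :
    IsStationary (Subtype.val ⁻¹' S : Set (Iio o)) ↔ IsStationaryIn o S := by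
  refine ⟨fun h C hC => ?_, fun h D hD => ?_⟩
  · obtain ⟨x, hxS, hxC⟩ := h hC.isClub_preimage
    exact ⟨x.1, hxS, hxC⟩
  · obtain ⟨_, hxS, x, hxD, rfl⟩ := h _ (isClubIn_image_of_isClub hD)
    exact ⟨x, hxS, hxD⟩

theorem cof_Iio_ord_of_isRegular {lam : Cardinal.{u}} (hreg : lam.IsRegular) :
    Order.cof (Iio lam.ord) = Cardinal.lift.{u + 1} lam := by
  rw [Ordinal.cof_Iio, ← Ordinal.lift_cof, hreg.cof_ord]

end Clubs

namespace Tree'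

variable {α : Type u}

def specialFiber (T : Tree' α) {S : Set Ordinal.{u}} {ι : Type u}
    (g : {x : α // T.ht x ∈ S} → ι) (c : ι) : Set α :=
  {x | ∃ h : T.ht x ∈ S, g ⟨x, h⟩ = c}

theorem isAntichain_specialFiber (T : Tree' α) {S : Set Ordinal.{u}} {ι : Type u}
    {g : {x : α // T.ht x ∈ S} → ι} (hg : ∀ x y, T.lt x.1 y.1 → g x ≠ g y) (c : ι) :
    T.IsAntichain (T.specialFiber g c) := by
  rintro x ⟨hxS, hxc⟩ y ⟨hyS, hyc⟩ -
  exact ⟨fun h => hg ⟨x, hxS⟩ ⟨y, hyS⟩ h (hxc.trans hyc.symm),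
    fun h => hg ⟨y, hyS⟩ ⟨x, hxS⟩ h (hyc.trans hxc.symm)⟩

end Tree'

theorem stmt15_general (μ lam : Cardinal.{u}) (hlam : lam = Order.succ μ)
    (hreg : lam.IsRegular) (hunc : ℵ₀ < lam)
    {α : Type u} (T : Tree' α) (hT : T.IsKTree lam)
    (S : Set Ordinal.{u})
    (hstat : IsStationaryIn lam.ord S)
    (hsp : T.IsSpecialOn S μ) :
    ∃ A : Set α, (∀ x ∈ A, T.ht x ∈ S) ∧ T.IsAntichain A ∧
      IsStationaryIn lam.ord (T.ht '' A) := by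
  obtain ⟨g, hg⟩ := hsp
  have hcover : (Subtype.val ⁻¹' S : Set (Iio lam.ord)) ⊆
      ⋃ c, Subtype.val ⁻¹' (T.ht '' T.specialFiber g c) := by
    rintro ⟨δ, hδ⟩ hδS
    obtain ⟨x, rfl⟩ := hT.2.1 δ hδ
    exact mem_iUnion.2 ⟨g ⟨x, hδS⟩, x, ⟨hδS, rfl⟩, rfl⟩
  have hcof := cof_Iio_ord_of_isRegular hreg
  obtain ⟨c, hc⟩ := (isStationary_iUnion_iff (by simp [hcof, hunc.ne'])
    (by simp [hcof, hlam])).1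
    ((isStationary_preimage_iff.2 hstat).mono hcover)
  exact ⟨T.specialFiber g c, fun x hx => hx.1, T.isAntichain_specialFiber hg c,
    isStationary_preimage_iff.1 hc⟩

/-- If `T` is a `λ`-tree (`λ = μ⁺` regular uncountable) and `T↾S` is special
for a stationary `S ⊆ λ`, then there is an antichain of `T↾S` whose set of
heights is a stationary subset of `S`. -/
theorem stmt15 (μ lam : Cardinal.{u}) (hlam : lam = Order.succ μ)
    (hreg : lam.IsRegular) (hunc : ℵ₀ < lam)
    {α : Type u} (T : Tree' α) (hT : T.IsKTree lam)
    (S : Set Ordinal.{u}) (hSsub : S ⊆ Iio lam.ord)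
    (hstat : IsStationaryIn lam.ord S)
    (hsp : T.IsSpecialOn S μ) :
    ∃ A : Set α, (∀ x ∈ A, T.ht x ∈ S) ∧ T.IsAntichain A ∧
      IsStationaryIn lam.ord (T.ht '' A) :=
  stmt15_general μ lam hlam hreg hunc T hT S hstat hsp

end FarTrees
end

section
/- Let κ be a regular uncountable cardinal. Then there exists a family {S_i : i < 2^(κ⁺)} of stationary subsets of κ⁺ ∩ cof(κ) such that for all distinct i, j < 2^(κ⁺), the set S_i \ S_j is stationary in κ⁺. -/
universe u

open Cardinal Set

namespace FarTrees

/-!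
The ordinals of cofinality `κ` are stationary in `κ⁺`: closing off a `κ`-sequence climbing
through a club gives a point of the club of cofinality `κ`. To split this set, fix for every
`α < κ⁺` an injection `e_α : α → κ` (Ulam matrix). For each `β < κ⁺` the stationary set of
`α > β` is partitioned by the value `e_α(β)` into `κ` pieces, so some piece `A(ξ_β, β)` is
stationary; by pigeonhole one `ξ₀` equals `ξ_β` for `κ⁺` many `β`, and the sets `A(ξ₀, β)` are
pairwise disjoint because `e_α` is injective. Finally, arrange `κ⁺` disjoint stationary sets as
pairs `T(b, 0), T(b, 1)` and code each `i < 2^(κ⁺)` by a function `c_i : κ⁺ → 2`; with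
`S_i = ⋃_b T(b, c_i(b))`, the difference `S_i \ S_j` contains `T(b, c_i(b))` wherever
`c_i(b) ≠ c_j(b)`.
-/

open Function Ordinal

theorem isClubIn_Ioo {δ β : Ordinal.{u}} (hδ : Order.IsSuccLimit δ) (hβ : β < δ) :
    IsClubIn δ (Ioo β δ) := by
  refine ⟨fun x hx => hx.2, fun γ hγ => ?_, fun x hx hacc => ?_⟩
  · have hβ' : Order.succ β < δ := hδ.succ_lt hβ
    exact ⟨max γ (Order.succ β), ⟨(Order.lt_succ β).trans_le (le_max_right _ _),
      max_lt hγ hβ'⟩, le_max_left _ _, max_lt hγ hβ'⟩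
  · obtain ⟨c, hc, -, hcx⟩ := hacc.2 0 hacc.1
    exact ⟨hc.1.trans hcx, hx⟩

namespace IsClubIn

variable {δ : Ordinal.{u}}

/-- The supremum of an `ω`-sequence climbing into every `C i` at each step lies in all of them. -/
theorem iInter (hδ : ℵ₀ < δ.cof) {ι : Type u} [Nonempty ι] (hι : #ι < δ.cof)
    {C : ι → Set Ordinal.{u}} (hC : ∀ i, IsClubIn δ (C i)) : IsClubIn δ (⋂ i, C i) := by
  choose! next hnext using fun i => (hC i).2.1
  refine ⟨fun x hx => (hC (Classical.arbitrary ι)).1 (mem_iInter.mp hx _), fun γ hγ => ?_,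
    fun β hβ hacc => mem_iInter.mpr fun i => (hC i).2.2 β hβ ⟨hacc.1, fun γ hγ => ?_⟩⟩
  · let g : ℕ → Ordinal.{u} := fun n => Nat.rec γ (fun _ x => ⨆ i, next i x + 1) n
    have hg : ∀ n, g n < δ := fun n => by
      induction n with
      | zero => exact hγ
      | succ n ih => exact iSup_add_one_lt_of_lt_cof hι fun i => (hnext i _ ih).2.2
    have hnext_lt : ∀ i n, next i (g n) < g (n + 1) := fun i n =>
      (Order.lt_add_one_iff.mpr le_rfl).trans_le (Ordinal.le_iSup (fun i => next i (g n) + 1) i)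
    have hβ : ⨆ n, g n < δ := by
      refine lift_iSup_lt_of_lt_cof ?_ hg
      simpa using hδ
    have hle : ∀ n, g n ≤ ⨆ n, g n := Ordinal.le_iSup g
    have hacc : ∀ i, IsAccOf (⨆ n, g n) (C i) := fun i => by
      refine ⟨zero_le.trans_lt ((hnext_lt i 0).trans_le (hle 1)), fun γ' hγ' => ?_⟩
      obtain ⟨n, hn⟩ := Ordinal.lt_iSup_iff.mp hγ'
      have hc := hnext i (g n) (hg n)
      exact ⟨next i (g n), hc.1, hn.trans_le hc.2.1, (hnext_lt i n).trans_le (hle (n + 1))⟩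
    exact ⟨⨆ n, g n, mem_iInter.mpr fun i => (hC i).2.2 _ hβ (hacc i), hle 0, hβ⟩
  · obtain ⟨c, hc, hγc, hcβ⟩ := hacc.2 γ hγ
    exact ⟨c, mem_iInter.mp hc i, hγc, hcβ⟩

theorem exists_mem_cof_eq {C : Set Ordinal.{u}} (hC : IsClubIn δ C) {γ : Type u} [LinearOrder γ]
    [WellFoundedLT γ] [Nonempty γ] [NoMaxOrder γ] (hγ : #γ < δ.cof) :
    ∃ β ∈ C, β.cof = Order.cof γ := by
  choose! next hnext using hC.2.1
  let g : γ → Ordinal.{u} := WellFoundedLT.fix fun x IH => next (⨆ y : Iio x, IH y y.2 + 1)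
  have hg_eq : ∀ x, g x = next (⨆ y : Iio x, g y + 1) := WellFoundedLT.fix_eq _
  have hsup : ∀ x, (∀ y < x, g y < δ) → ⨆ y : Iio x, g y + 1 < δ := fun x h =>
    iSup_add_one_lt_of_lt_cof ((mk_set_le _).trans_lt hγ) fun y => h y y.2
  have hgδ : ∀ x, g x < δ := fun x => by
    induction x using WellFoundedLT.induction with | ind x IH
    rw [hg_eq]
    exact (hnext _ (hsup x IH)).2.2
  have hnext_g : ∀ x, next (⨆ y : Iio x, g y + 1) ∈ C ∧ _ ∧ _ := fun x =>
    hnext _ (hsup x fun y _ => hgδ y)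
  have hmono : StrictMono g := fun y x hyx => by
    rw [hg_eq x]
    calc g y < g y + 1 := lt_add_one _
      _ ≤ ⨆ y : Iio x, g y + 1 := Ordinal.le_iSup (fun y : Iio x => g y + 1) ⟨y, hyx⟩
      _ ≤ _ := (hnext_g x).2.1
  have hlt_sup : ∀ x, g x < ⨆ x, g x := fun x =>
    (hmono (exists_gt x).choose_spec).trans_le (Ordinal.le_iSup g _)
  refine ⟨⨆ x, g x, hC.2.2 _ (iSup_lt_of_lt_cof hγ hgδ) ⟨?_, fun β hβ => ?_⟩, cof_iSup hmono⟩
  · exact zero_le.trans_lt (hlt_sup (Classical.arbitrary γ))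
  · obtain ⟨x, hx⟩ := Ordinal.lt_iSup_iff.mp hβ
    exact ⟨g x, by rw [hg_eq]; exact (hnext_g x).1, hx, hlt_sup x⟩

end IsClubIn

theorem isStationaryIn_cofSet {κ : Cardinal.{u}} (hκ : κ.IsRegular) :
    IsStationaryIn (Order.succ κ).ord (cofSet κ) := fun C hC => by
  have := Cardinal.noMaxOrder hκ.aleph0_le
  have : Nonempty κ.ord.ToType := nonempty_toType_iff.mpr (by simpa using hκ.ne_zero)
  obtain ⟨β, hβC, hβ⟩ := hC.exists_mem_cof_eq (γ := κ.ord.ToType)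
    (by rw [(isRegular_succ hκ.aleph0_le).cof_ord, mk_toType, card_ord]; exact Order.lt_succ κ)
  exact ⟨β, ⟨hC.1 hβC, by rw [hβ, cof_toType, hκ.cof_ord]⟩, hβC⟩

namespace IsStationaryIn

variable {δ : Ordinal.{u}} {S S' : Set Ordinal.{u}}

theorem mono (hS : IsStationaryIn δ S) (h : S ⊆ S') : IsStationaryIn δ S' :=
  fun C hC => (hS C hC).mono (inter_subset_inter_left C h)

theorem exists_stationary_fiber (hδ : ℵ₀ < δ.cof) {ι : Type u} (hι : #ι < δ.cof)
    (hS : IsStationaryIn δ S) (F : Ordinal.{u} → ι) :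
    ∃ i, IsStationaryIn δ {α ∈ S | F α = i} := by
  have : Nonempty ι := ⟨F 0⟩
  by_contra! h
  simp only [IsStationaryIn, not_forall, not_nonempty_iff_eq_empty] at h
  choose D hD hdisj using h
  obtain ⟨α, hαS, hαD⟩ := hS _ (IsClubIn.iInter hδ hι hD)
  exact eq_empty_iff_forall_notMem.mp (hdisj (F α)) α ⟨⟨hαS, rfl⟩, mem_iInter.mp hαD _⟩

theorem not_subset_Iic (hδ : Order.IsSuccLimit δ) (hS : IsStationaryIn δ S) {β : Ordinal.{u}}
    (hβ : β < δ) : ¬ S ⊆ Iic β := fun h => by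
  obtain ⟨α, hαS, hα⟩ := hS _ (isClubIn_Ioo hδ hβ)
  exact (h hαS).not_gt hα.1

end IsStationaryIn

theorem exists_injOn_Iio {α : Ordinal.{u}} {X : Type u} [Nonempty X] (h : α.card ≤ #X) :
    ∃ e : Ordinal.{u} → X, InjOn e (Iio α) := by
  obtain ⟨f⟩ := lift_mk_le'.mp
    (by rwa [Cardinal.mk_Iio_ordinal, Cardinal.lift_lift, Cardinal.lift_le] :
      lift.{u} #(Iio α) ≤ lift.{u + 1} #X)
  refine ⟨Function.extend Subtype.val f fun _ => Classical.arbitrary X, ?_⟩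
  rw [injOn_iff_injective]
  convert f.injective
  ext x
  exact Subtype.val_injective.extend_apply _ _ x

theorem exists_pairwise_disjoint_isStationaryIn {κ : Cardinal.{u}} (hκ : ℵ₀ ≤ κ)
    {S : Set Ordinal.{u}} (hSκ : S ⊆ Iio (Order.succ κ).ord)
    (hS : IsStationaryIn (Order.succ κ).ord S) :
    ∃ (B : Type u) (T : B → Set Ordinal.{u}), Order.succ κ ≤ #B ∧
      (∀ b, T b ⊆ S ∧ IsStationaryIn (Order.succ κ).ord (T b)) ∧ Pairwise (Disjoint on T) := by
  set L := (Order.succ κ).ord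
  have hL : L.cof = Order.succ κ := (isRegular_succ hκ).cof_ord
  have hLlim : Order.IsSuccLimit L := isSuccLimit_ord (hκ.trans (Order.le_succ κ))
  have : Nonempty κ.ord.ToType :=
    nonempty_toType_iff.mpr (by simpa using (aleph0_pos.trans_le hκ).ne')
  have hcode : ∀ α < L, ∃ e : Ordinal.{u} → κ.ord.ToType, InjOn e (Iio α) := fun α hα =>
    exists_injOn_Iio (by rw [mk_toType, card_ord]; exact Order.lt_succ_iff.mp (lt_ord.mp hα))
  choose! e he using hcode
  have hκL : κ < L.cof := hL ▸ Order.lt_succ κ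
  have hfiber : ∀ β < L, ∃ ξ, IsStationaryIn L {α ∈ S | β < α ∧ e α β = ξ} := fun β hβ => by
    obtain ⟨ξ, hξ⟩ := hS.exists_stationary_fiber (hκ.trans_lt hκL)
      (by rwa [mk_option, mk_toType, card_ord, add_one_eq hκ])
      -- the colour `none` collects the `α ≤ β`, a bounded and hence nonstationary fiber
      fun α => if β < α then some (e α β) else none
    cases ξ with
    | none => exact (hξ.not_subset_Iic hLlim hβ fun α hα => by simpa using hα.2).elim
    | some ξ =>
      refine ⟨ξ, hξ.mono fun α ⟨hαS, hα⟩ => ?_⟩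
      split_ifs at hα with h
      exact ⟨hαS, h, Option.some_injective _ hα⟩
  choose! ξ hξ using hfiber
  let pos : L.ToType → Ordinal.{u} := fun w => (ToType.toOrd w).1
  obtain ⟨ξ₀, hξ₀⟩ := infinite_pigeonhole_card (fun w => ξ (pos w)) (Order.succ κ)
    (by rw [mk_toType, card_ord]) (hκ.trans (Order.le_succ κ))
    (by rwa [mk_toType, card_ord])
  refine ⟨_, fun w : (fun w => ξ (pos w)) ⁻¹' {ξ₀} => {α ∈ S | pos w < α ∧ e α (pos w) = ξ₀},
    hξ₀, fun w => ⟨fun α hα => hα.1, ?_⟩, fun w w' hne => ?_⟩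
  · simpa only [← mem_singleton_iff.mp w.2] using hξ (pos w) (ToType.toOrd w.1).2
  · rw [onFun, disjoint_left]
    rintro α ⟨hαS, hlt, heq⟩ ⟨-, hlt', heq'⟩
    refine hne (Subtype.ext (ToType.mk.symm.injective (Subtype.ext ?_)))
    exact he α (hSκ hαS) hlt hlt' (heq.trans heq'.symm)

theorem exists_family_isStationaryIn_sdiff {δ : Ordinal.{u}} {S : Set Ordinal.{u}} {B : Type u}
    (hB : ℵ₀ ≤ #B) {T : B → Set Ordinal.{u}} (hT : ∀ b, T b ⊆ S ∧ IsStationaryIn δ (T b))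
    (hdisj : Pairwise (Disjoint on T)) {I : Type u} (hI : #I ≤ 2 ^ #B) :
    ∃ Sf : I → Set Ordinal.{u}, (∀ i, Sf i ⊆ S ∧ IsStationaryIn δ (Sf i)) ∧
      ∀ i j, i ≠ j → IsStationaryIn δ (Sf i \ Sf j) := by
  obtain ⟨pair⟩ : Nonempty (B × Bool ↪ B) := by
    refine (Cardinal.le_def _ _).mp ?_
    simpa using (Cardinal.mul_eq_left hB (ofNat_le_aleph0.trans hB) two_ne_zero).le
  obtain ⟨code⟩ : Nonempty (I ↪ (B → Bool)) := (Cardinal.le_def _ _).mp (by simpa using hI)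
  have : Nonempty B := mk_ne_zero_iff.mp (aleph0_pos.trans_le hB).ne'
  refine ⟨fun i => ⋃ b, T (pair (b, code i b)), fun i => ⟨iUnion_subset fun b => (hT _).1, ?_⟩,
    fun i j hij => ?_⟩
  · exact (hT _).2.mono (subset_iUnion_of_subset (Classical.arbitrary B) subset_rfl)
  · obtain ⟨b, hb⟩ : ∃ b, code i b ≠ code j b :=
      not_forall.mp fun h => hij (code.injective (funext h))
    refine (hT (pair (b, code i b))).2.mono fun α hα => ⟨mem_iUnion.mpr ⟨b, hα⟩, fun hαj => ?_⟩
    obtain ⟨b', hα'⟩ := mem_iUnion.mp hαj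
    have hne : pair (b, code i b) ≠ pair (b', code j b') := fun h => by
      obtain ⟨rfl, h⟩ := Prod.ext_iff.mp (pair.injective h)
      exact hb h
    exact disjoint_left.mp (hdisj hne) hα hα'

theorem stmt17_general (κ : Cardinal.{u}) (hreg : κ.IsRegular) :
    ∃ Sf : ((2 : Cardinal.{u}) ^ Order.succ κ).ord.ToType → Set Ordinal.{u},
      (∀ i, Sf i ⊆ cofSet κ ∧ IsStationaryIn (Order.succ κ).ord (Sf i)) ∧
      ∀ i j, i ≠ j → IsStationaryIn (Order.succ κ).ord (Sf i \ Sf j) := by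
  obtain ⟨B, T, hB, hT, hdisj⟩ := exists_pairwise_disjoint_isStationaryIn hreg.aleph0_le
    (fun α hα => hα.1) (isStationaryIn_cofSet hreg)
  refine exists_family_isStationaryIn_sdiff (hreg.aleph0_le.trans ((Order.le_succ κ).trans hB))
    hT hdisj ?_
  rw [mk_toType, card_ord]
  exact power_le_power_left two_ne_zero hB

/-- There is a family of `2^(κ⁺)` many stationary subsets of `κ⁺ ∩ cof(κ)`
such that the difference of any two distinct members is stationary. -/
theorem stmt17 (κ : Cardinal.{u}) (hreg : κ.IsRegular) (hunc : ℵ₀ < κ) :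
    ∃ Sf : ((2 : Cardinal.{u}) ^ Order.succ κ).ord.ToType → Set Ordinal.{u},
      (∀ i, Sf i ⊆ cofSet κ ∧ IsStationaryIn (Order.succ κ).ord (Sf i)) ∧
      ∀ i j, i ≠ j → IsStationaryIn (Order.succ κ).ord (Sf i \ Sf j) :=
  stmt17_general κ hreg

end FarTrees
end
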